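/- Let d, d', r be positive integers with r ≤ min(d, d'). There exist matrices U_1, …, U_{N₁} ∈ ℝ^{d×r} and V_1, …, V_{N₂} ∈ ℝ^{d'×r} with N₁ = ⌊17^{d·r}⌋, N₂ = ⌊17^{d'·r}⌋, ‖U_j‖₂ ≤ 1 and ‖V_{j'}‖₂ ≤ 1 for all j, j', such that for every real normed vector space F and every linear map f : ℝ^{d×d'} → F, one has sup{ ‖f(M)‖ : M ∈ ℝ^{d×d'}, ‖M‖₂ ≤ 1, rank(M) ≤ r } ≤ 2 · max_{j ≤ N₁, j' ≤ N₂} ‖f(U_j V_{j'}ᵀ)‖. (Lemma B.1(ii) of the paper, the right-hand inequality of display (B.1): a (1/8)-net of rank-one products controls the supremum of ‖f‖ over the low-rank unit spectral-norm ball up to a factor 2.) -/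

import Mathlib

/-!
A matrix `M` with `‖M‖₂ ≤ 1` and rank at most `r` factors as `M = A Bᵀ` with `‖A‖₂, ‖B‖₂ ≤ 1`:
let the columns of `A` be an orthonormal basis of the column space of `M`, padded by zero
columns, and put `B = Mᵀ A`, so that `A Bᵀ = A Aᵀ M = M`. Hence `‖f M‖` is at most the maximum
`s` of the bilinear function `(A, B) ↦ ‖f (A Bᵀ)‖` over the product of the two unit balls, which
is attained at some `(A₀, B₀)` by compactness. If `U_j`, `V_j'` are net points within `1/8` of
`A₀`, `B₀`, expanding `A₀ B₀ᵀ = U_j V_j'ᵀ + (A₀ - U_j) B₀ᵀ + U_j (B₀ - V_j')ᵀ` gives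
`s ≤ ‖f (U_j V_j'ᵀ)‖ + s / 4`, so `s ≤ 2 ‖f (U_j V_j'ᵀ)‖`.

The nets exist because a maximal `1/8`-separated subset of the unit ball of an `n`-dimensional
space is a `1/8`-net, and the disjoint balls of radius `1/16` around its points fit in the ball
of radius `17/16`, which bounds its size by `17 ^ n`.
-/

open Metric MeasureTheory Module Set Submodule
open scoped NNReal ENNReal Matrix Matrix.Norms.L2Operator

theorem Set.exists_range_eq_of_encard_le {α : Type*} {s : Set α} (hs : s.Nonempty) {N : ℕ}
    (h : s.encard ≤ N) : ∃ u : Fin N → α, range u = s := by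
  have hfin : s.Finite := finite_of_encard_le_coe h
  have : Fintype s := hfin.fintype
  have : Nonempty s := hs.to_subtype
  obtain ⟨e⟩ : Nonempty (s ↪ Fin N) := Function.Embedding.nonempty_of_card_le <| by
    rw [Fintype.card_fin, ← Nat.card_eq_fintype_card, Nat.card_coe_set_eq]
    exact_mod_cast hfin.cast_ncard_eq ▸ h
  refine ⟨Subtype.val ∘ Function.invFun e, ?_⟩
  rw [range_comp, (Function.invFun_surjective e.injective).range_eq, image_univ,
    Subtype.range_coe]

section FiniteDimensional

variable {E : Type*} [NormedAddCommGroup E] [NormedSpace ℝ E] [FiniteDimensional ℝ E]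

theorem Finset.card_le_of_isSeparated_closedBall {T : Finset E} {x : E} {R : ℝ} {ε : ℝ≥0}
    (hε : 0 < ε) (hR : 0 ≤ R) (hT : (T : Set E) ⊆ closedBall x R)
    (hsep : IsSeparated ε (T : Set E)) :
    (T.card : ℝ) ≤ (2 * R / ε + 1) ^ finrank ℝ E := by
  let _ : MeasurableSpace E := borel E
  have _ : BorelSpace E := ⟨rfl⟩
  set n := finrank ℝ E
  set μ : Measure E := Measure.addHaar
  set ρ : ℝ := ε / 2 with hρ_def
  have hρ : 0 < ρ := by positivity
  have hdisj : (T : Set E).PairwiseDisjoint fun y => ball y ρ := by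
    intro a ha b hb hab
    refine ball_disjoint_ball ?_
    have : (ε : ℝ≥0∞) < edist a b := hsep ha hb hab
    rw [edist_nndist, ENNReal.coe_lt_coe, ← NNReal.coe_lt_coe, coe_nndist] at this
    linarith [hρ_def]
  have hsub : ⋃ y ∈ T, ball y ρ ⊆ ball x (R + ρ) :=
    iUnion₂_subset fun y hy => ball_subset_ball' (by linarith [mem_closedBall.1 (hT hy)])
  have hvol : (T.card : ℝ≥0∞) * ENNReal.ofReal (ρ ^ n) * μ (ball 0 1)
      ≤ ENNReal.ofReal ((R + ρ) ^ n) * μ (ball 0 1) := by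
    calc (T.card : ℝ≥0∞) * ENNReal.ofReal (ρ ^ n) * μ (ball 0 1)
        = ∑ y ∈ T, μ (ball y ρ) := by
          rw [Finset.sum_congr rfl fun y _ => Measure.addHaar_ball_of_pos μ y hρ,
            Finset.sum_const, nsmul_eq_mul, mul_assoc]
      _ = μ (⋃ y ∈ T, ball y ρ) := (measure_biUnion_finset hdisj fun _ _ => measurableSet_ball).symm
      _ ≤ μ (ball x (R + ρ)) := measure_mono hsub
      _ = _ := Measure.addHaar_ball_of_pos μ _ (by linarith)
  have hcard : (T.card : ℝ) * ρ ^ n ≤ (R + ρ) ^ n := by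
    rw [ENNReal.mul_le_mul_iff_left (measure_ball_pos μ 0 one_pos).ne' measure_ball_lt_top.ne,
      ← ENNReal.ofReal_natCast, ← ENNReal.ofReal_mul (by positivity),
      ENNReal.ofReal_le_ofReal_iff (by positivity)] at hvol
    exact hvol
  calc (T.card : ℝ) ≤ (R + ρ) ^ n / ρ ^ n := by rwa [le_div_iff₀ (by positivity)]
    _ = (2 * R / ε + 1) ^ n := by
      rw [← div_pow]; congr 1; field_simp; ring

theorem packingNumber_closedBall_le (x : E) {R : ℝ} {ε : ℝ≥0} (hε : 0 < ε) (hR : 0 ≤ R) :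
    packingNumber ε (closedBall x R) ≤ ⌊(2 * R / ε + 1) ^ finrank ℝ E⌋₊ := by
  refine iSup₂_le fun C hC => iSup_le fun hsep => ?_
  by_contra! hlt
  obtain ⟨t, htC, htcard⟩ := exists_subset_encard_eq (Order.add_one_le_of_lt hlt)
  have htfin : t.Finite := finite_of_encard_eq_coe htcard
  have hcard : htfin.toFinset.card ≤ ⌊(2 * R / ε + 1) ^ finrank ℝ E⌋₊ :=
    Nat.le_floor <| htfin.toFinset.card_le_of_isSeparated_closedBall hε hR
      (by simpa using htC.trans hC) (by simpa using hsep.subset htC)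
  rw [htfin.encard_eq_coe_toFinset_card] at htcard
  norm_cast at htcard
  omega

theorem exists_fin_isCover_closedBall (x : E) {R : ℝ} {ε : ℝ≥0} (hε : 0 < ε) (hR : 0 ≤ R)
    {N : ℕ} (hN : ⌊(2 * R / ε + 1) ^ finrank ℝ E⌋₊ ≤ N) :
    ∃ u : Fin N → E, (∀ j, u j ∈ closedBall x R) ∧ IsCover ε (closedBall x R) (range u) := by
  have hpack := packingNumber_closedBall_le x hε hR
  have hfin : packingNumber ε (closedBall x R) ≠ ⊤ := ne_top_of_le_ne_top (by simp) hpack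
  have hcover := isCover_maximalSeparatedSet hfin
  obtain ⟨u, hu⟩ := exists_range_eq_of_encard_le (hcover.nonempty ⟨x, mem_closedBall_self hR⟩)
    ((encard_maximalSeparatedSet hfin).trans_le (hpack.trans (by exact_mod_cast hN)))
  exact ⟨u, fun j => maximalSeparatedSet_subset (hu ▸ mem_range_self j), hu ▸ hcover⟩

end FiniteDimensional

theorem Metric.IsCover.exists_dist_le {X : Type*} [PseudoMetricSpace X] {ε : ℝ≥0} {s N : Set X}
    (h : IsCover ε s N) {x : X} (hx : x ∈ s) : ∃ y ∈ N, dist x y ≤ ε := by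
  obtain ⟨y, hy, hxy⟩ := h hx
  exact ⟨y, hy, edist_le_coe.1 hxy⟩

section Bilinear

variable {X Y Z : Type*}
    [NormedAddCommGroup X] [NormedSpace ℝ X] [FiniteDimensional ℝ X]
    [NormedAddCommGroup Y] [NormedSpace ℝ Y] [FiniteDimensional ℝ Y]
    [NormedAddCommGroup Z] [NormedSpace ℝ Z]

theorem ContinuousLinearMap.exists_opNorm_le_norm_apply₂ (B : X →L[ℝ] Y →L[ℝ] Z) :
    ∃ a₀ ∈ closedBall (0 : X) 1, ∃ b₀ ∈ closedBall (0 : Y) 1, ‖B‖ ≤ ‖B a₀ b₀‖ := by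
  obtain ⟨⟨a₀, b₀⟩, ⟨ha₀, hb₀⟩, hmax⟩ :=
    ((isCompact_closedBall (0 : X) 1).prod (isCompact_closedBall (0 : Y) 1)).exists_isMaxOn
      ⟨(0, 0), by simp⟩ (continuous_norm.comp B.continuous₂).continuousOn
  refine ⟨a₀, ha₀, b₀, hb₀, ?_⟩
  refine B.opNorm_le_of_unit_norm (norm_nonneg _) fun a ha =>
    (B a).opNorm_le_of_unit_norm (norm_nonneg _) fun b hb => ?_
  exact hmax (show (a, b) ∈ closedBall 0 1 ×ˢ closedBall 0 1 by simp [ha, hb])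

theorem LinearMap.exists_forall_norm_le_of_isCover (β : X →ₗ[ℝ] Y →ₗ[ℝ] Z) {δ : ℝ≥0}
    {S : Set X} {T : Set Y} (hS : S ⊆ closedBall 0 1) (hSX : IsCover δ (closedBall 0 1) S)
    (hTY : IsCover δ (closedBall 0 1) T) :
    ∃ a' ∈ S, ∃ b' ∈ T, ∀ a b, ‖a‖ ≤ 1 → ‖b‖ ≤ 1 → (1 - 2 * δ) * ‖β a b‖ ≤ ‖β a' b'‖ := by
  let B : X →L[ℝ] Y →L[ℝ] Z :=
    toContinuousLinearMap (toContinuousLinearMap.toLinearMap ∘ₗ β)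
  change ∃ a' ∈ S, ∃ b' ∈ T, ∀ a b, _ → _ → (1 - 2 * δ) * ‖B a b‖ ≤ ‖B a' b'‖
  obtain ⟨a₀, ha₀, b₀, hb₀, hB⟩ := B.exists_opNorm_le_norm_apply₂
  obtain ⟨a', ha'S, ha'⟩ := hSX.exists_dist_le ha₀
  obtain ⟨b', hb'T, hb'⟩ := hTY.exists_dist_le hb₀
  rw [mem_closedBall_zero_iff] at ha₀ hb₀
  have ha'1 : ‖a'‖ ≤ 1 := by simpa using hS ha'S
  rw [dist_eq_norm] at ha' hb'
  refine ⟨a', ha'S, b', hb'T, fun a b ha hb => ?_⟩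
  have hdecomp : B a₀ b₀ = B a' b' + B (a₀ - a') b₀ + B a' (b₀ - b') := by
    simp only [map_sub, _root_.sub_apply]; abel
  have key : ‖B‖ ≤ ‖B a' b'‖ + ‖B‖ * δ * 1 + ‖B‖ * 1 * δ := calc
    ‖B‖ ≤ ‖B a' b' + B (a₀ - a') b₀ + B a' (b₀ - b')‖ := hdecomp ▸ hB
    _ ≤ ‖B a' b'‖ + ‖B (a₀ - a') b₀‖ + ‖B a' (b₀ - b')‖ := norm_add₃_le
    _ ≤ ‖B a' b'‖ + ‖B‖ * ‖a₀ - a'‖ * ‖b₀‖ + ‖B‖ * ‖a'‖ * ‖b₀ - b'‖ := by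
      gcongr <;> exact B.le_opNorm₂ _ _
    _ ≤ ‖B a' b'‖ + ‖B‖ * δ * 1 + ‖B‖ * 1 * δ := by gcongr
  have hab : ‖B a b‖ ≤ ‖B‖ := calc
    ‖B a b‖ ≤ ‖B‖ * ‖a‖ * ‖b‖ := B.le_opNorm₂ a b
    _ ≤ ‖B‖ * 1 * 1 := by gcongr
    _ = ‖B‖ := by ring
  rcases le_or_gt (2 * (δ : ℝ)) 1 with hδ | hδ
  · nlinarith
  · nlinarith [norm_nonneg (B a b), norm_nonneg (B a' b')]

end Bilinear

namespace Matrix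
variable {m n : Type*} [Fintype m] [Fintype n]

theorem l2_opNorm_transpose [DecidableEq m] [DecidableEq n] (A : Matrix m n ℝ) : ‖Aᵀ‖ = ‖A‖ := by
  rw [← conjTranspose_eq_transpose_of_trivial, l2_opNorm_conjTranspose]

theorem l2_opNorm_le_one_of_transpose_mul_self_eq_one [DecidableEq n] {A : Matrix m n ℝ}
    (h : Aᵀ * A = 1) : ‖A‖ ≤ 1 := by
  have h1 : ‖(1 : Matrix n n ℝ)‖ ≤ 1 := by
    rw [← diagonal_one, l2_opNorm_diagonal]
    exact (pi_norm_le_iff_of_nonneg zero_le_one).2 fun _ => by simp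
  have : ‖A‖ * ‖A‖ ≤ 1 := by
    rwa [← l2_opNorm_conjTranspose_mul_self, conjTranspose_eq_transpose_of_trivial, h]
  nlinarith [norm_nonneg A]

theorem l2_opNorm_le_one_of_mul_transpose_self_eq_one [DecidableEq m] [DecidableEq n]
    {A : Matrix m n ℝ} (h : A * Aᵀ = 1) : ‖A‖ ≤ 1 := by
  rw [← l2_opNorm_transpose]
  exact l2_opNorm_le_one_of_transpose_mul_self_eq_one (by rwa [transpose_transpose])

theorem exists_transpose_mul_self_eq_one_and_mul_transpose_mul_eq [DecidableEq m]
    (M : Matrix m n ℝ) :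
    ∃ Q : Matrix m (Fin M.rank) ℝ, Qᵀ * Q = 1 ∧ Q * Qᵀ * M = M := by
  let e := (WithLp.linearEquiv 2 ℝ (m → ℝ)).symm
  let W := (span ℝ (range M.col)).map e.toLinearMap
  have hW : finrank ℝ W = M.rank := by
    rw [LinearEquiv.finrank_map_eq, rank_eq_finrank_span_cols]
  let b := (stdOrthonormalBasis ℝ W).reindex (finCongr hW)
  let Q : Matrix m (Fin M.rank) ℝ := of fun i p => (b p : EuclideanSpace ℝ m) i
  refine ⟨Q, ?_, ?_⟩
  · ext p q
    have := orthonormal_iff_ite.1 (b.orthonormal.comp_linearIsometry W.subtypeₗᵢ) p q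
    rw [mul_apply, one_apply, ← this, PiLp.inner_apply]
    refine Finset.sum_congr rfl fun i _ => ?_
    simp [Q, mul_comm]
  · ext i j
    have hcol : e (M.col j) ∈ W := mem_map_of_mem (subset_span ⟨j, rfl⟩)
    have := congr_arg (fun x : W => (x : EuclideanSpace ℝ m) i) (b.sum_repr' ⟨_, hcol⟩)
    simp only [coe_sum, coe_smul, WithLp.ofLp_sum, WithLp.ofLp_smul, Finset.sum_apply,
      Pi.smul_apply, smul_eq_mul] at this
    rw [Matrix.mul_assoc, mul_apply]
    convert this using 1
    · refine Finset.sum_congr rfl fun p _ => ?_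
      simp [Q, mul_apply, PiLp.inner_apply, e, mul_comm]
    · simp [e]

theorem exists_mul_transpose_eq_one_of_le (R : Type*) [NonAssocSemiring R] {k r : ℕ}
    (h : k ≤ r) : ∃ S : Matrix (Fin k) (Fin r) R, S * Sᵀ = 1 := by
  refine ⟨(1 : Matrix (Fin r) (Fin r) R).submatrix (Fin.castLE h) id, ?_⟩
  rw [transpose_submatrix, transpose_one, ← submatrix_mul _ _ _ _ _ Function.bijective_id,
    Matrix.one_mul, submatrix_one _ (Fin.castLE_injective h)]

theorem exists_l2_opNorm_le_one_mul_transpose_mul_eq [DecidableEq m] (M : Matrix m n ℝ) {r : ℕ}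
    (h : M.rank ≤ r) : ∃ A : Matrix m (Fin r) ℝ, ‖A‖ ≤ 1 ∧ A * Aᵀ * M = M := by
  obtain ⟨Q, hQ, hQM⟩ := exists_transpose_mul_self_eq_one_and_mul_transpose_mul_eq M
  obtain ⟨S, hS⟩ := exists_mul_transpose_eq_one_of_le ℝ h
  refine ⟨Q * S, ?_, ?_⟩
  · calc ‖Q * S‖ ≤ ‖Q‖ * ‖S‖ := l2_opNorm_mul Q S
      _ ≤ 1 * 1 := by
        gcongr
        exacts [l2_opNorm_le_one_of_transpose_mul_self_eq_one hQ,
          l2_opNorm_le_one_of_mul_transpose_self_eq_one hS]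
      _ = 1 := one_mul 1
  · rw [transpose_mul, Matrix.mul_assoc Q, ← Matrix.mul_assoc S, hS, Matrix.one_mul, hQM]

theorem exists_eq_mul_transpose_of_rank_le [DecidableEq m] [DecidableEq n] {M : Matrix m n ℝ}
    (hM : ‖M‖ ≤ 1) {r : ℕ} (h : M.rank ≤ r) :
    ∃ (A : Matrix m (Fin r) ℝ) (B : Matrix n (Fin r) ℝ), ‖A‖ ≤ 1 ∧ ‖B‖ ≤ 1 ∧ M = A * Bᵀ := by
  obtain ⟨A, hA, hAM⟩ := exists_l2_opNorm_le_one_mul_transpose_mul_eq M h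
  refine ⟨A, Mᵀ * A, hA, ?_, ?_⟩
  · calc ‖Mᵀ * A‖ ≤ ‖Mᵀ‖ * ‖A‖ := l2_opNorm_mul _ _
      _ ≤ 1 * 1 := by rw [l2_opNorm_transpose]; gcongr
      _ = 1 := one_mul 1
  · rw [transpose_mul, transpose_transpose, ← Matrix.mul_assoc, hAM]

end Matrix

theorem stmt_3_general (d d' r : ℕ) :
    ∃ (U : Fin (17 ^ (d * r)) → Matrix (Fin d) (Fin r) ℝ)
      (V : Fin (17 ^ (d' * r)) → Matrix (Fin d') (Fin r) ℝ),
      (∀ j, ‖U j‖ ≤ 1) ∧ (∀ j', ‖V j'‖ ≤ 1) ∧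
      ∀ (F : Type) (_ : NormedAddCommGroup F) (_ : NormedSpace ℝ F)
        (f : Matrix (Fin d) (Fin d') ℝ →ₗ[ℝ] F)
        (M : Matrix (Fin d) (Fin d') ℝ), ‖M‖ ≤ 1 → M.rank ≤ r →
          ∃ j j', ‖f M‖ ≤ 2 * ‖f (U j * (V j')ᵀ)‖ := by
  have hsize (k l : ℕ) :
      ⌊(2 * 1 / ((1 / 8 : ℝ≥0) : ℝ) + 1) ^ finrank ℝ (Matrix (Fin k) (Fin l) ℝ)⌋₊
        ≤ 17 ^ (k * l) := by
    norm_num [finrank_matrix]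
    exact_mod_cast (Nat.floor_natCast _).le
  obtain ⟨U, hU, hUcov⟩ := exists_fin_isCover_closedBall (0 : Matrix (Fin d) (Fin r) ℝ)
    (by norm_num) zero_le_one (hsize d r)
  obtain ⟨V, hV, hVcov⟩ := exists_fin_isCover_closedBall (0 : Matrix (Fin d') (Fin r) ℝ)
    (by norm_num) zero_le_one (hsize d' r)
  refine ⟨U, V, fun j => by simpa using hU j, fun j' => by simpa using hV j',
    fun F _ _ f M hM hrank => ?_⟩
  obtain ⟨A, B, hA, hB, rfl⟩ := Matrix.exists_eq_mul_transpose_of_rank_le hM hrank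
  let β := ((mulLinearMap ℝ).compl₂
    (Matrix.transposeLinearEquiv (Fin d') (Fin r) ℝ ℝ).toLinearMap).compr₂ f
  obtain ⟨_, ⟨j, rfl⟩, _, ⟨j', rfl⟩, hnet⟩ :=
    β.exists_forall_norm_le_of_isCover (range_subset_iff.2 hU) hUcov hVcov
  refine ⟨j, j', ?_⟩
  have := hnet A B hA hB
  norm_num [β] at this
  linarith [norm_nonneg (f (U j * (V j')ᵀ))]

/-- **Lemma B.1(ii), right-hand inequality of display (B.1)**: a `(1/8)`-net of rank-one
products `U_j V_{j'}ᵀ` (with `‖U_j‖₂ ≤ 1`, `‖V_{j'}‖₂ ≤ 1`, `N₁ = 17^{d r}`,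
`N₂ = 17^{d' r}`) controls, for every real normed space `F` and every linear map
`f : ℝ^{d×d'} → F`, the supremum of `‖f‖` over the set of matrices with spectral norm
at most `1` and rank at most `r`, up to a factor `2`:
`sup { ‖f M‖ : ‖M‖₂ ≤ 1, rank M ≤ r } ≤ 2 · max_{j,j'} ‖f (U_j V_{j'}ᵀ)‖`
(stated equivalently, since the maximum over the finite nonempty family is attained, as:
for every such `M` there are `j, j'` with `‖f M‖ ≤ 2 ‖f (U_j V_{j'}ᵀ)‖`).
Here `‖·‖` on matrices is the `ℓ²→ℓ²` operator (spectral) norm. -/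
theorem stmt_3 (d d' r : ℕ) (hr : 1 ≤ r) (hrd : r ≤ min d d') :
    ∃ (U : Fin (17 ^ (d * r)) → Matrix (Fin d) (Fin r) ℝ)
      (V : Fin (17 ^ (d' * r)) → Matrix (Fin d') (Fin r) ℝ),
      (∀ j, ‖U j‖ ≤ 1) ∧ (∀ j', ‖V j'‖ ≤ 1) ∧
      ∀ (F : Type) (_ : NormedAddCommGroup F) (_ : NormedSpace ℝ F)
        (f : Matrix (Fin d) (Fin d') ℝ →ₗ[ℝ] F)
        (M : Matrix (Fin d) (Fin d') ℝ), ‖M‖ ≤ 1 → M.rank ≤ r →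
          ∃ j j', ‖f M‖ ≤ 2 * ‖f (U j * (V j')ᵀ)‖ :=
  stmt_3_general d d' r
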